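/- Let N ≥ 1 and let 1 ≤ i, j ≤ N. Then the average over commutators in the orthogonal group satisfies ⟨C_{ij}⟩ = δ_{ij}/N²; that is, the entrywise average of the commutator C = u v u⁻¹ v⁻¹ over independent Haar-distributed u, v ∈ O(N) equals 1/N² times the N×N identity matrix. -/

import Mathlib

/-!
Left invariance of `μ` under the orthogonal matrices that flip the sign of a row or permute
the rows gives the second moments `∫ u_ab u_cd = δ_ac δ_bd / N`: the sign flip kills them
for `a ≠ c`, the permutations make them independent of the row `a = c`, and orthonormality of
the columns fixes their sum over the rows. Hence `∫ v A vᵀ dμ(v) = (tr A / N) • 1`, so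
integrating `u v u⁻¹ v⁻¹ = u (v uᵀ vᵀ)` over `v` leaves `u tr u / N`, and the second moments
once more give `δ_ij / N²`. Integrability is never an issue because `O(N)` is compact.
-/

open MeasureTheory Matrix

noncomputable instance (N : ℕ) : MeasurableSpace (Matrix (Fin N) (Fin N) ℝ) := borel _
instance (N : ℕ) : BorelSpace (Matrix (Fin N) (Fin N) ℝ) := ⟨rfl⟩

theorem Continuous.integrable_of_compactSpace {X E : Type*} [TopologicalSpace X] [CompactSpace X]
    [MeasurableSpace X] [OpensMeasurableSpace X] [NormedAddCommGroup E] {μ : Measure X}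
    [IsFiniteMeasure μ] {f : X → E} (hf : Continuous f) : Integrable f μ :=
  hf.integrable_of_hasCompactSupport (.of_compactSpace f)

namespace Matrix

variable {n : Type*} [Fintype n] [DecidableEq n]

instance : CompactSpace (orthogonalGroup n ℝ) := by
  refine isCompact_iff_compactSpace.mp ?_
  have hbox : IsCompact
      (Set.univ.pi fun _ => Set.univ.pi fun _ => Set.Icc (-1) 1 : Set (Matrix n n ℝ)) :=
    isCompact_univ_pi fun _ => isCompact_univ_pi fun _ => isCompact_Icc
  refine hbox.of_isClosed_subset (isClosed_unitary (R := Matrix n n ℝ)) fun u hu a _ b _ => ?_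
  exact abs_le.mp (entry_norm_bound_of_unitary hu a b)

theorem permMatrix_mem_unitaryGroup {R : Type*} [CommRing R] [StarRing R] (σ : Equiv.Perm n) :
    σ.permMatrix R ∈ unitaryGroup n R := by
  rw [mem_unitaryGroup_iff, star_eq_conjTranspose, conjTranspose_permMatrix, ← permMatrix_mul,
    inv_mul_cancel, permMatrix_one]

theorem diagonal_mem_unitaryGroup {R : Type*} [CommRing R] [StarRing R] {d : n → R}
    (hd : ∀ i, d i * star (d i) = 1) : diagonal d ∈ unitaryGroup n R := by
  rw [mem_unitaryGroup_iff, star_eq_conjTranspose, diagonal_conjTranspose, diagonal_mul_diagonal]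
  simp [hd]

@[fun_prop]
theorem continuous_orthogonalGroup_apply (a b : n) :
    Continuous fun u : orthogonalGroup n ℝ => u.1 a b :=
  continuous_subtype_val.matrix_elem a b

theorem orthogonalGroup_sum_apply_mul_apply (u : orthogonalGroup n ℝ) (b d : n) :
    ∑ k, u.1 k b * u.1 k d = if b = d then 1 else 0 := by
  simpa [mul_apply, one_apply] using congrFun₂ (UnitaryGroup.star_mul_self u) b d

section Integral

variable [MeasurableSpace (orthogonalGroup n ℝ)] [BorelSpace (orthogonalGroup n ℝ)]
  (μ : Measure (orthogonalGroup n ℝ)) [μ.IsMulLeftInvariant]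

theorem integral_orthogonalGroup_apply_mul_apply_of_ne {a c : n} (hac : a ≠ c) (b d : n) :
    ∫ u, u.1 a b * u.1 c d ∂μ = 0 := by
  -- Flipping the sign of row `a` negates the integrand.
  let s : n → ℝ := fun l => if l = a then -1 else 1
  have hs : ∀ l, s l * star (s l) = 1 := fun l => by by_cases l = a <;> simp [s, *]
  have h := integral_mul_left_eq_self (μ := μ) (fun u : orthogonalGroup n ℝ => u.1 a b * u.1 c d)
    ⟨diagonal s, diagonal_mem_unitaryGroup hs⟩
  simp only [Submonoid.coe_mul, diagonal_mul, ↓reduceIte, neg_mul, one_mul, hac.symm,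
    integral_neg, s] at h
  linarith

theorem integral_orthogonalGroup_apply_mul_apply_row_swap (a a' b d : n) :
    ∫ u, u.1 a b * u.1 a d ∂μ = ∫ u, u.1 a' b * u.1 a' d ∂μ := by
  have h := integral_mul_left_eq_self (μ := μ) (fun u : orthogonalGroup n ℝ => u.1 a b * u.1 a d)
    ⟨_, permMatrix_mem_unitaryGroup (Equiv.swap a a')⟩
  simpa [PEquiv.toMatrix_toPEquiv_mul] using h.symm

theorem integral_orthogonalGroup_apply_mul_apply_same_row [IsProbabilityMeasure μ] (a b d : n) :
    ∫ u, u.1 a b * u.1 a d ∂μ = if b = d then (Fintype.card n : ℝ)⁻¹ else 0 := by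
  -- Summing over the row index turns the integrand into an inner product of two columns.
  have hcols : ∑ a', ∫ u, u.1 a' b * u.1 a' d ∂μ = if b = d then 1 else 0 := by
    rw [← integral_finsetSum _ fun _ _ => (by fun_prop : Continuous _).integrable_of_compactSpace]
    simp [orthogonalGroup_sum_apply_mul_apply]
  simp only [← integral_orthogonalGroup_apply_mul_apply_row_swap μ a, Finset.sum_const,
    Finset.card_univ, nsmul_eq_mul] at hcols
  have : Nonempty n := ⟨a⟩
  have hcard : (Fintype.card n : ℝ) ≠ 0 := Nat.cast_ne_zero.mpr Fintype.card_ne_zero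
  rw [eq_inv_mul_iff_mul_eq₀ hcard |>.mpr hcols]
  split_ifs <;> simp

theorem integral_orthogonalGroup_apply_mul_apply [IsProbabilityMeasure μ] (a b c d : n) :
    ∫ u, u.1 a b * u.1 c d ∂μ = if a = c ∧ b = d then (Fintype.card n : ℝ)⁻¹ else 0 := by
  obtain rfl | hac := eq_or_ne a c
  · simpa using integral_orthogonalGroup_apply_mul_apply_same_row μ a b d
  · simp [integral_orthogonalGroup_apply_mul_apply_of_ne μ hac, hac]

theorem integral_orthogonalGroup_mul_mul_transpose_apply [IsProbabilityMeasure μ]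
    (A : Matrix n n ℝ) (i j : n) :
    ∫ v, (v.1 * A * v.1ᵀ) i j ∂μ = if i = j then trace A / Fintype.card n else 0 := by
  have hexpand : ∀ v : orthogonalGroup n ℝ,
      (v.1 * A * v.1ᵀ) i j = ∑ k, ∑ l, A k l * (v.1 i k * v.1 j l) := fun v => by
    simp only [mul_apply, transpose_apply, Finset.sum_mul]
    rw [Finset.sum_comm]
    exact Finset.sum_congr rfl fun _ _ => Finset.sum_congr rfl fun _ _ => by ring
  have hint : ∀ k l, Integrable (fun v : orthogonalGroup n ℝ => A k l * (v.1 i k * v.1 j l)) μ :=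
    fun _ _ => (by fun_prop : Continuous _).integrable_of_compactSpace
  simp_rw [hexpand]
  rw [integral_finsetSum _ fun k _ => integrable_finsetSum _ fun l _ => hint k l]
  simp_rw [integral_finsetSum _ fun l _ => hint _ l, integral_const_mul,
    integral_orthogonalGroup_apply_mul_apply μ]
  split_ifs with hij <;> simp [hij, trace, Finset.sum_mul, div_eq_mul_inv]

theorem integral_orthogonalGroup_commutator_apply [IsProbabilityMeasure μ]
    (u : orthogonalGroup n ℝ) (i j : n) :
    ∫ v, (↑(u * v * u⁻¹ * v⁻¹) : Matrix n n ℝ) i j ∂μ = u.1 i j * trace u.1 / Fintype.card n := by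
  have hcomm : ∀ v : orthogonalGroup n ℝ,
      (↑(u * v * u⁻¹ * v⁻¹) : Matrix n n ℝ) = u.1 * (v.1 * u.1ᵀ * v.1ᵀ) := fun v => by
    simp [mul_assoc, star_eq_conjTranspose]
  simp_rw [hcomm, mul_apply (M := u.1)]
  rw [integral_finsetSum _ fun _ _ => (by fun_prop : Continuous _).integrable_of_compactSpace]
  simp_rw [integral_const_mul, integral_orthogonalGroup_mul_mul_transpose_apply μ, trace_transpose]
  simp [mul_ite, mul_div_assoc]

end Integral

end Matrix

theorem entry_avg_CO_general (N : ℕ) (i j : Fin N)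
    (μ : Measure (Matrix.orthogonalGroup (Fin N) ℝ))
    [μ.IsHaarMeasure] [IsProbabilityMeasure μ] :
    ∫ u, ∫ v, ((u * v * u⁻¹ * v⁻¹ : Matrix.orthogonalGroup (Fin N) ℝ) :
        Matrix (Fin N) (Fin N) ℝ) i j ∂μ ∂μ
      = if i = j then 1 / (N : ℝ) ^ 2 else 0 := by
  simp_rw [integral_orthogonalGroup_commutator_apply μ]
  simp only [trace, diag_apply, Finset.mul_sum, Finset.sum_div]
  rw [integral_finsetSum _ fun _ _ => (by fun_prop : Continuous _).integrable_of_compactSpace]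
  simp_rw [integral_div, integral_orthogonalGroup_apply_mul_apply μ]
  split_ifs with hij
  · simp [hij, sq, div_eq_mul_inv]
  · simp [ite_div, ite_and, Ne.symm hij]

/-- ⟨C_{ij}⟩ over CO(N) equals δ_{ij}/N². -/
theorem entry_avg_CO (N : ℕ) (hN : 1 ≤ N) (i j : Fin N)
    (μ : Measure (Matrix.orthogonalGroup (Fin N) ℝ))
    [μ.IsHaarMeasure] [IsProbabilityMeasure μ] :
    ∫ u, ∫ v, ((u * v * u⁻¹ * v⁻¹ : Matrix.orthogonalGroup (Fin N) ℝ) :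
        Matrix (Fin N) (Fin N) ℝ) i j ∂μ ∂μ
      = if i = j then 1 / (N : ℝ) ^ 2 else 0 :=
  entry_avg_CO_general N i j μ
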